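/- arXiv:2105.09161 — 3 statements merged into one kernel-verified Lean document; each statement's English description precedes it below -/
import Mathlib

section
/- Let R be a commutative Noetherian ring, let A be a faithfully flat commutative R-algebra, and let I be an ideal of R. Then I is a syzygetic ideal of R if and only if the extended ideal IA is a syzygetic ideal of A. -/
/-! For flat `A` the map `A ⊗[R] I → IA` is an isomorphism, hence so is
`A ⊗[R] (I ⊗[R] I) ≃ IA ⊗[A] IA`, and it turns the multiplication map of `IA` into the base
change of that of `I`. By flatness the kernel for `IA` is then the base change of the kernel
for `I`, and since `IA` is generated by the image of `I`, the span of the elements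
`b ⊗ a - a ⊗ b` for `IA` is the base change of the one for `I`. Faithful flatness makes base
change injective on submodules, so one kernel equals its span exactly when the other does;
the condition on the range of the multiplication map holds for every ideal. -/
universe u v

open TensorProduct in
/-- An ideal `I` of a commutative ring `R` is *syzygetic* if the complex
`∧²(I) → I ⊗ I → I² → 0` is exact, where the first map sends `u ∧ v` to `v ⊗ u - u ⊗ v`
and the second map is induced by multiplication. Equivalently, the multiplication map
`I ⊗ I → R` has range `I²` and kernel spanned by the elements `b ⊗ a - a ⊗ b`. -/
def Ideal.IsSyzygetic {R : Type*} [CommRing R] (I : Ideal R) : Prop :=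
  LinearMap.range (Submodule.mulMap I I) = I * I ∧
    LinearMap.ker (Submodule.mulMap I I) =
      Submodule.span R {w : I ⊗[R] I | ∃ a b : I, w = b ⊗ₜ a - a ⊗ₜ b}

open TensorProduct Submodule

lemma span_tmul_sub_tmul_eq_span_image2 {R M : Type*} [CommSemiring R] [AddCommGroup M]
    [Module R M] {s : Set M} (hs : span R s = ⊤) :
    span R {w : M ⊗[R] M | ∃ a b : M, w = b ⊗ₜ a - a ⊗ₜ b} =
      span R (Set.image2 (fun a b => b ⊗ₜ[R] a - a ⊗ₜ b) s s) := by
  let alt : M →ₗ[R] M →ₗ[R] M ⊗[R] M :=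
    (TensorProduct.mk R M M).flip - TensorProduct.mk R M M
  have key := map₂_span_span R alt s s
  rw [hs, ← span_univ, map₂_span_span] at key
  convert key using 2
  · ext w
    simp [alt, eq_comm]
  · rfl

namespace Ideal
variable {R : Type*} (A : Type*) [CommRing R] [CommRing A] [Algebra R A] (I : Ideal R)

lemma subtype_comp_liftBaseChange_idealMap :
    (I.map (algebraMap R A)).subtype ∘ₗ (Algebra.idealMap A I).liftBaseChange A =
      (AlgebraTensorModule.rid R A A).toLinearMap ∘ₗ I.subtype.baseChange A := by
  ext x
  simp [Algebra.smul_def, mul_comm]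

lemma liftBaseChange_idealMap_surjective :
    Function.Surjective ((Algebra.idealMap A I).liftBaseChange A) := by
  rintro ⟨y, hy⟩
  have hle : I.map (algebraMap R A) ≤ LinearMap.range
      ((I.map (algebraMap R A)).subtype ∘ₗ (Algebra.idealMap A I).liftBaseChange A) :=
    map_le_iff_le_comap.2 fun x hx => ⟨1 ⊗ₜ ⟨x, hx⟩, by simp⟩
  obtain ⟨t, ht⟩ := hle hy
  exact ⟨t, Subtype.ext ht⟩

variable [Module.Flat R A]

lemma liftBaseChange_idealMap_injective :
    Function.Injective ((Algebra.idealMap A I).liftBaseChange A) := by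
  refine .of_comp (f := (I.map (algebraMap R A)).subtype) ?_
  rw [← LinearMap.coe_comp, subtype_comp_liftBaseChange_idealMap]
  exact (AlgebraTensorModule.rid R A A).injective.comp
    (Module.Flat.lTensor_preserves_injective_linearMap _ I.injective_subtype)

noncomputable def tensorEquivMap : A ⊗[R] I ≃ₗ[A] I.map (algebraMap R A) :=
  .ofBijective _ ⟨liftBaseChange_idealMap_injective A I, liftBaseChange_idealMap_surjective A I⟩

@[simp]
lemma coe_tensorEquivMap_tmul (a : A) (x : I) :
    (I.tensorEquivMap A (a ⊗ₜ x) : A) = a * algebraMap R A x := by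
  change ((Algebra.idealMap A I).liftBaseChange A (a ⊗ₜ x) : A) = _
  simp

noncomputable def tensorSquareEquivMap :
    A ⊗[R] (I ⊗[R] I) ≃ₗ[A] I.map (algebraMap R A) ⊗[A] I.map (algebraMap R A) :=
  (AlgebraTensorModule.distribBaseChange R A I I).trans
    (congr (I.tensorEquivMap A) (I.tensorEquivMap A))

lemma tensorSquareEquivMap_one_tmul (x y : I) :
    I.tensorSquareEquivMap A (1 ⊗ₜ (x ⊗ₜ y)) =
      I.tensorEquivMap A (1 ⊗ₜ x) ⊗ₜ I.tensorEquivMap A (1 ⊗ₜ y) := by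
  simp [tensorSquareEquivMap]

lemma mulMap_comp_tensorSquareEquivMap :
    mulMap (I.map (algebraMap R A)) (I.map (algebraMap R A)) ∘ₗ
        (I.tensorSquareEquivMap A).toLinearMap =
      (AlgebraTensorModule.rid R A A).toLinearMap ∘ₗ (mulMap I I).baseChange A := by
  ext x y
  simp [tensorSquareEquivMap, Algebra.smul_def]

lemma ker_mulMap_map_eq_map_baseChange :
    LinearMap.ker (mulMap (I.map (algebraMap R A)) (I.map (algebraMap R A))) =
      ((LinearMap.ker (mulMap I I)).baseChange A).map (I.tensorSquareEquivMap A).toLinearMap := by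
  set J := I.map (algebraMap R A)
  set Φ := (I.tensorSquareEquivMap A).toLinearMap
  calc LinearMap.ker (mulMap J J)
      _ = (LinearMap.ker (mulMap J J ∘ₗ Φ)).map Φ := by
        rw [LinearMap.ker_comp, map_comap_eq_of_surjective (I.tensorSquareEquivMap A).surjective]
      _ = (LinearMap.ker ((mulMap I I).baseChange A)).map Φ := by
        rw [mulMap_comp_tensorSquareEquivMap, LinearEquiv.ker_comp]
      _ = ((LinearMap.ker (mulMap I I)).baseChange A).map Φ :=
        congrArg _ (Module.Flat.ker_lTensor_eq A A (mulMap I I))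

lemma span_range_tensorEquivMap_one_tmul :
    Submodule.span A (Set.range fun x : I => I.tensorEquivMap A (1 ⊗ₜ x)) = ⊤ := by
  have hrange : (Set.range fun x : I => I.tensorEquivMap A (1 ⊗ₜ x)) =
      I.tensorEquivMap A '' (TensorProduct.mk R A I 1 '' Set.univ) := by
    ext; simp
  rw [hrange, Submodule.span_image_linearEquiv, ← baseChange_span, Submodule.span_univ,
    baseChange_top, Submodule.map_top, LinearEquiv.range]

lemma span_tmul_sub_tmul_map_eq_map_baseChange :
    Submodule.span A {w : I.map (algebraMap R A) ⊗[A] I.map (algebraMap R A) |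
        ∃ a b : I.map (algebraMap R A), w = b ⊗ₜ a - a ⊗ₜ b} =
      (Submodule.baseChange A
        (Submodule.span R {w : I ⊗[R] I | ∃ a b : I, w = b ⊗ₜ a - a ⊗ₜ b})).map
          (I.tensorSquareEquivMap A).toLinearMap := by
  rw [span_tmul_sub_tmul_eq_span_image2 (span_range_tensorEquivMap_one_tmul A I),
    baseChange_span, Submodule.map_span]
  congr 1
  ext w
  constructor
  · rintro ⟨_, ⟨x, rfl⟩, _, ⟨y, rfl⟩, rfl⟩
    exact ⟨_, ⟨_, ⟨x, y, rfl⟩, rfl⟩, by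
      simp only [mk_apply, map_sub, LinearEquiv.coe_coe, tensorSquareEquivMap_one_tmul]⟩
  · rintro ⟨_, ⟨_, ⟨x, y, rfl⟩, rfl⟩, rfl⟩
    exact ⟨_, ⟨x, rfl⟩, _, ⟨y, rfl⟩, by
      simp only [mk_apply, map_sub, LinearEquiv.coe_coe, tensorSquareEquivMap_one_tmul]⟩

end Ideal

theorem isSyzygetic_iff_map_isSyzygetic_of_faithfullyFlat_general
    (R : Type u) [CommRing R]
    (A : Type v) [CommRing A] [Algebra R A] [Module.FaithfullyFlat R A]
    (I : Ideal R) :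
    I.IsSyzygetic ↔ (I.map (algebraMap R A)).IsSyzygetic := by
  simp only [Ideal.IsSyzygetic, mulMap_range, true_and]
  rw [I.ker_mulMap_map_eq_map_baseChange A, I.span_tmul_sub_tmul_map_eq_map_baseChange A,
    (map_injective_of_injective (I.tensorSquareEquivMap A).injective).eq_iff, baseChange_inj]

/-- Let `R` be a Noetherian commutative ring, `A` a faithfully flat commutative `R`-algebra
and `I` an ideal of `R`. Then `I` is syzygetic if and only if the extended ideal `IA`
is syzygetic. -/
theorem isSyzygetic_iff_map_isSyzygetic_of_faithfullyFlat
    (R : Type u) [CommRing R] [IsNoetherianRing R]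
    (A : Type v) [CommRing A] [Algebra R A] [Module.FaithfullyFlat R A]
    (I : Ideal R) :
    I.IsSyzygetic ↔ (I.map (algebraMap R A)).IsSyzygetic :=
  isSyzygetic_iff_map_isSyzygetic_of_faithfullyFlat_general R A I
end

section
/- Let (R, m, k) be a regular local ring of Krull dimension 5, let x, y, z, t, u be a regular system of parameters of R, let I be the ideal generated by f₁ = y² − xz, f₂ = yz − xt, f₃ = z² − yt, f₄ = yt − xu, f₅ = zt − yu, f₆ = t² − zu, f₇ = zu − x³, f₈ = tu − x²y, f₉ = u² − x²z, and let H = (f₁, f₂, f₃, f₄, f₅, f₆, f₇, f₉) be the ideal generated by all the fᵢ except f₈. Then f₈ ∉ H, while f₈² ∈ H·I; in particular, the colon ideal H : f₈ is a proper ideal of R while HI : f₈² = R, so H : f₈ is strictly contained in HI : f₈². -/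
universe u

/-- A commutative ring `R` is a *regular local ring* if it is Noetherian, local, and its
maximal ideal can be generated by `dim R` elements. -/
def IsRegularLocalRing' (R : Type*) [CommRing R] : Prop :=
  IsNoetherianRing R ∧ ∃ _ : IsLocalRing R, ∃ s : Finset R,
    Ideal.span (s : Set R) = IsLocalRing.maximalIdeal R ∧
      (s.card : WithBot ℕ∞) = ringKrullDim R

/-!
Modulo `(x, y, z)` every generator of `H` lies in `(t², u²)` while `f₈ ≡ tu`, so `f₈ ∈ H`
would give `tu ∈ (x, y, z, t², u²)`. Writing `tu ≡ a t² + b u²`, the ideal `(x, y, z, w)` has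
radical the maximal ideal for `w = u` if `a` is a unit, `w = t` if `b` is, and `w = t + u`
otherwise; by Krull's height theorem this forces `dim R ≤ 4`. The membership `f₈² ∈ H·I` is an
explicit identity, and the colon statements follow at once.
-/

open IsLocalRing Ideal

section

variable {R : Type*} [CommRing R]

lemma ringKrullDim_le_card_of_radical_span_eq_maximalIdeal [IsNoetherianRing R] [IsLocalRing R]
    (s : Finset R) (hs : (span (s : Set R)).radical = maximalIdeal R) :
    ringKrullDim R ≤ s.card := by
  have hmin : maximalIdeal R ∈ (span (s : Set R)).minimalPrimes := by
    rw [← radical_minimalPrimes, hs, minimalPrimes_eq_subsingleton_self]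
    rfl
  rw [← maximalIdeal_height_eq_ringKrullDim]
  exact_mod_cast height_le_card_of_mem_minimalPrimes_span_finset hmin

lemma sq_mem_sup_span_singleton_of_mul_eq {J : Ideal R} {t u a b j : R} (hj : j ∈ J)
    (ha : IsUnit a) (h : t * u = j + a * t ^ 2 + b * u ^ 2) :
    t ^ 2 ∈ J ⊔ span {u} := by
  rw [← unit_mul_mem_iff_mem _ ha, show a * t ^ 2 = -j + (t - b * u) * u by linear_combination -h]
  exact add_mem (mem_sup_left (neg_mem hj))
    (mem_sup_right (mul_mem_left _ _ (mem_span_singleton_self u)))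

lemma exists_span_pair_le_radical_of_mul_mem_sup_span_sq [IsLocalRing R] {J : Ideal R}
    {t u : R} (h : t * u ∈ J ⊔ span {t ^ 2, u ^ 2}) :
    ∃ w ∈ span {t, u}, span {t, u} ≤ (J ⊔ span {w}).radical := by
  obtain ⟨j, hj, v, hv, hjv⟩ := Submodule.mem_sup.mp h
  obtain ⟨a, b, rfl⟩ := mem_span_pair.mp hv
  have key : t * u = j + a * t ^ 2 + b * u ^ 2 := by rw [← hjv, add_assoc]
  suffices ∃ w ∈ span {t, u}, t ^ 2 ∈ J ⊔ span {w} ∧ u ^ 2 ∈ J ⊔ span {w} by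
    obtain ⟨w, hw, ht, hu⟩ := this
    refine ⟨w, hw, span_le.mpr ?_⟩
    rintro _ (rfl | rfl)
    exacts [⟨2, ht⟩, ⟨2, hu⟩]
  have hmem : ∀ {w : R}, w ∈ J ⊔ span {w} := mem_sup_right (mem_span_singleton_self _)
  by_cases ha : IsUnit a
  · exact ⟨u, subset_span (by simp), sq_mem_sup_span_singleton_of_mul_eq hj ha key,
      pow_mem_of_mem _ hmem 2 two_pos⟩
  by_cases hb : IsUnit b
  · exact ⟨t, subset_span (by simp), pow_mem_of_mem _ hmem 2 two_pos,
      sq_mem_sup_span_singleton_of_mul_eq hj hb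
        (by linear_combination key : u * t = j + b * u ^ 2 + a * t ^ 2)⟩
  have hunit : IsUnit (1 + a + b) := by
    by_contra hab
    rw [← mem_nonunits_iff, ← mem_maximalIdeal] at ha hb hab
    have h1 : (1 : R) ∈ maximalIdeal R := by
      convert sub_mem (sub_mem hab ha) hb using 1
      ring
    exact one_notMem_nonunits h1
  -- modulo `t + u` one has `tu ≡ -t²` and `u² ≡ t²`, so `(1 + a + b) t² ≡ 0`
  have ht : t ^ 2 ∈ J ⊔ span {t + u} := by
    rw [← unit_mul_mem_iff_mem _ hunit,
      show (1 + a + b) * t ^ 2 = -j + (t + b * (t - u)) * (t + u) by linear_combination -key]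
    exact add_mem (mem_sup_left (neg_mem hj)) (mul_mem_left _ _ hmem)
  refine ⟨t + u, add_mem (subset_span (by simp)) (subset_span (by simp)), ht, ?_⟩
  rw [show u ^ 2 = (u - t) * (t + u) + t ^ 2 by ring]
  exact add_mem (mul_mem_left _ _ hmem) ht

lemma mul_notMem_sup_span_sq [IsNoetherianRing R] [IsLocalRing R] (s : Finset R) {t u : R}
    (hm : span (s : Set R) ⊔ span {t, u} = maximalIdeal R)
    (hdim : s.card + 2 ≤ ringKrullDim R) :
    t * u ∉ span (s : Set R) ⊔ span {t ^ 2, u ^ 2} := by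
  classical
  intro h
  obtain ⟨w, hw, hle⟩ := exists_span_pair_le_radical_of_mul_mem_sup_span_sq h
  have hrad : (span ((insert w s : Finset R) : Set R)).radical = maximalIdeal R := by
    rw [Finset.coe_insert, span_insert, sup_comm]
    refine le_antisymm ((IsPrime.radical_le_iff inferInstance).mpr ?_) ?_
    · rw [← hm]
      exact sup_le_sup_left ((span_singleton_le_iff_mem _).mpr hw) _
    · rw [← hm]
      exact sup_le (le_sup_left.trans le_radical) hle
  have hcard : (s.card + 2 : WithBot ℕ∞) ≤ (insert w s).card :=
    hdim.trans (ringKrullDim_le_card_of_radical_span_eq_maximalIdeal _ hrad)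
  have := Finset.card_insert_le w s
  norm_cast at hcard
  omega

lemma sq_tu_sub_mem_span_mul_span (x y z t u : R) :
    (t * u - x ^ 2 * y) ^ 2 ∈
      span {y ^ 2 - x * z, y * z - x * t, z ^ 2 - y * t, y * t - x * u,
        z * t - y * u, t ^ 2 - z * u, z * u - x ^ 3, u ^ 2 - x ^ 2 * z} *
      span {y ^ 2 - x * z, y * z - x * t, z ^ 2 - y * t, y * t - x * u,
        z * t - y * u, t ^ 2 - z * u, z * u - x ^ 3, t * u - x ^ 2 * y, u ^ 2 - x ^ 2 * z} := by
  rw [show (t * u - x ^ 2 * y) ^ 2 =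
      (u ^ 2 - x ^ 2 * z) * (t ^ 2 - z * u) + (u ^ 2 - x ^ 2 * z) * (z * u - x ^ 3)
        + x * ((z ^ 2 - y * t) * (y * t - x * u)) + x * ((y * t - x * u) * (y * t - x * u))
        - x * ((y * z - x * t) * (z * t - y * u)) - x * ((y ^ 2 - x * z) * (z * u - x ^ 3))
      by ring]
  refine sub_mem (sub_mem (add_mem (add_mem (add_mem ?_ ?_) (mul_mem_left _ _ ?_))
    (mul_mem_left _ _ ?_)) (mul_mem_left _ _ ?_)) (mul_mem_left _ _ ?_) <;>
    exact mul_mem_mul (subset_span (by simp)) (subset_span (by simp))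

lemma span_le_sup_span_sq (x y z t u : R) :
    span {y ^ 2 - x * z, y * z - x * t, z ^ 2 - y * t, y * t - x * u,
        z * t - y * u, t ^ 2 - z * u, z * u - x ^ 3, u ^ 2 - x ^ 2 * z} ≤
      span {x, y, z} ⊔ span {t ^ 2, u ^ 2} := by
  set J := span {x, y, z} ⊔ span {t ^ 2, u ^ 2}
  have hx : Ideal.Quotient.mk J x = 0 :=
    Ideal.Quotient.eq_zero_iff_mem.mpr (mem_sup_left (subset_span (by simp)))
  have hy : Ideal.Quotient.mk J y = 0 :=
    Ideal.Quotient.eq_zero_iff_mem.mpr (mem_sup_left (subset_span (by simp)))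
  have hz : Ideal.Quotient.mk J z = 0 :=
    Ideal.Quotient.eq_zero_iff_mem.mpr (mem_sup_left (subset_span (by simp)))
  have ht : Ideal.Quotient.mk J t ^ 2 = 0 := by
    rw [← map_pow]
    exact Ideal.Quotient.eq_zero_iff_mem.mpr (mem_sup_right (subset_span (by simp)))
  have hu : Ideal.Quotient.mk J u ^ 2 = 0 := by
    rw [← map_pow]
    exact Ideal.Quotient.eq_zero_iff_mem.mpr (mem_sup_right (subset_span (by simp)))
  rw [span_le]
  intro g hg
  rw [SetLike.mem_coe, ← Ideal.Quotient.eq_zero_iff_mem]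
  rcases hg with rfl | rfl | rfl | rfl | rfl | rfl | rfl | rfl <;> simp [hx, hy, hz, ht, hu]

end

/-- In a regular local ring of dimension `5` with regular system of parameters
`x, y, z, t, u`, with `I = (f₁, …, f₉)` and `H = (f₁, …, f₇, f₉)`, one has `f₈ ∉ H`
while `f₈² ∈ H·I`; hence `H : f₈` is proper, `HI : f₈² = R`, and
`H : f₈` is strictly contained in `HI : f₈²`. -/
theorem colon_strict_mono_of_f8
    (R : Type u) [CommRing R] [IsLocalRing R]
    (hreg : IsRegularLocalRing' R) (hdim : ringKrullDim R = 5)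
    (x y z t u : R)
    (hgen : Ideal.span {x, y, z, t, u} = IsLocalRing.maximalIdeal R)
    (I H : Ideal R)
    (hI : I = Ideal.span {y ^ 2 - x * z, y * z - x * t, z ^ 2 - y * t, y * t - x * u,
      z * t - y * u, t ^ 2 - z * u, z * u - x ^ 3, t * u - x ^ 2 * y, u ^ 2 - x ^ 2 * z})
    (hH : H = Ideal.span {y ^ 2 - x * z, y * z - x * t, z ^ 2 - y * t, y * t - x * u,
      z * t - y * u, t ^ 2 - z * u, z * u - x ^ 3, u ^ 2 - x ^ 2 * z}) :
    (t * u - x ^ 2 * y) ∉ H ∧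
    (t * u - x ^ 2 * y) ^ 2 ∈ H * I ∧
    Submodule.colon H (Ideal.span {t * u - x ^ 2 * y}) ≠ ⊤ ∧
    Submodule.colon (H * I) (Ideal.span {(t * u - x ^ 2 * y) ^ 2}) = ⊤ ∧
    Submodule.colon H (Ideal.span {t * u - x ^ 2 * y}) <
      Submodule.colon (H * I) (Ideal.span {(t * u - x ^ 2 * y) ^ 2}) := by
  classical
  have : IsNoetherianRing R := hreg.1
  have htu : t * u ∉ span {x, y, z} ⊔ span {t ^ 2, u ^ 2} := by
    have hm : span (({x, y, z} : Finset R) : Set R) ⊔ span {t, u} = maximalIdeal R := by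
      rw [← hgen, ← span_union]
      congr 1
      ext
      simp only [Finset.coe_insert, Finset.coe_singleton, Set.mem_union, Set.mem_insert_iff,
        Set.mem_singleton_iff]
      tauto
    have hcard : (({x, y, z} : Finset R).card + 2 : WithBot ℕ∞) ≤ ringKrullDim R := by
      rw [hdim]
      exact_mod_cast Nat.add_le_add_right Finset.card_le_three 2
    simpa using mul_notMem_sup_span_sq _ hm hcard
  have hf₈ : t * u - x ^ 2 * y ∉ H := fun hmem => htu <| by
    rw [show t * u = (t * u - x ^ 2 * y) + x * x * y by ring]
    exact add_mem ((hH ▸ span_le_sup_span_sq x y z t u) hmem)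
      (mem_sup_left (mul_mem_left _ _ (subset_span (by simp))))
  have hf₈_sq : (t * u - x ^ 2 * y) ^ 2 ∈ H * I :=
    hH ▸ hI ▸ sq_tu_sub_mem_span_mul_span x y z t u
  have hcolon : Submodule.colon H (span {t * u - x ^ 2 * y}) ≠ ⊤ := by simpa using hf₈
  have hcolon_sq : Submodule.colon (H * I) (span {(t * u - x ^ 2 * y) ^ 2}) = ⊤ := by
    simpa using hf₈_sq
  exact ⟨hf₈, hf₈_sq, hcolon, hcolon_sq, hcolon_sq ▸ lt_top_iff_ne_top.mpr hcolon⟩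
end

section
/- Let (R, m, k) be a complete regular local ring of Krull dimension 5, let x, y, z, t, u be a regular system of parameters of R, let I be the ideal generated by f₁ = y² − xz, f₂ = yz − xt, f₃ = z² − yt, f₄ = yt − xu, f₅ = zt − yu, f₆ = t² − zu, f₇ = zu − x³, f₈ = tu − x²y, f₉ = u² − x²z, let p be an associated prime of R/I, let D = R/p, let V be the integral closure of D in its field of fractions K (a discrete valuation ring, finite as a D-module), and let ν be the corresponding valuation on K. Then there exists an integer n ≥ 1 such that (ν(x), ν(y), ν(z), ν(t), ν(u)) = (6n, 7n, 8n, 9n, 10n), where x, y, z, t, u denote the images in D of the parameters. -/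
universe u

/-! The generators of `I` are the binomial relations of the monomial curve
`s ↦ (s⁶, s⁷, s⁸, s⁹, s¹⁰)`. The image of `x` in the discrete valuation ring `V` is nonzero
(otherwise `p` would be the maximal ideal and `V` a field), so the relations turn into linear
equations on the valuations of the images of `x, …, u`, which force them to be
`(6n, 7n, 8n, 9n, 10n)`. Finally `n ≥ 1` because `x` is a nonunit and `R → V` is a local
homomorphism, `V` being integral over `R ⧸ p`. -/

open IsDiscreteValuationRing IsLocalRing

theorem not_isField_of_isDiscreteValuationRing_integralClosure {D : Type*} [CommRing D]
    [IsDomain D] [IsDiscreteValuationRing (integralClosure D (FractionRing D))] : ¬IsField D :=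
  fun hD ↦ not_isField (integralClosure D (FractionRing D)) (isField_of_isIntegral_of_isField' hD)

theorem span_le_of_mem_of_relations {R : Type*} [CommRing R] {p : Ideal R} [hp : p.IsPrime]
    {x y z t u : R} (h₁ : y ^ 2 - x * z ∈ p) (h₃ : z ^ 2 - y * t ∈ p)
    (h₆ : t ^ 2 - z * u ∈ p) (h₉ : u ^ 2 - x ^ 2 * z ∈ p) (hx : x ∈ p) :
    Ideal.span {x, y, z, t, u} ≤ p := by
  have hy : y ∈ p := hp.mem_of_pow_mem 2 <| (p.sub_mem_iff_left (p.mul_mem_right z hx)).mp h₁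
  have hz : z ∈ p := hp.mem_of_pow_mem 2 <| (p.sub_mem_iff_left (p.mul_mem_right t hy)).mp h₃
  have hu : u ∈ p := hp.mem_of_pow_mem 2 <| (p.sub_mem_iff_left (p.mul_mem_left _ hz)).mp h₉
  have ht : t ∈ p := hp.mem_of_pow_mem 2 <| (p.sub_mem_iff_left (p.mul_mem_left z hu)).mp h₆
  simp [Ideal.span_le, Set.insert_subset_iff, hx, hy, hz, ht, hu]

theorem exists_addVal_eq_of_relations {V : Type*} [CommRing V] [IsDomain V]
    [IsDiscreteValuationRing V] {X Y Z T U : V} (hX : X ≠ 0)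
    (h₁ : Y ^ 2 = X * Z) (h₂ : Y * Z = X * T) (h₃ : Z ^ 2 = Y * T) (h₄ : Y * T = X * U)
    (h₇ : Z * U = X ^ 3) :
    ∃ n : ℕ, addVal V X = (6 * n : ℕ) ∧ addVal V Y = (7 * n : ℕ) ∧ addVal V Z = (8 * n : ℕ) ∧
      addVal V T = (9 * n : ℕ) ∧ addVal V U = (10 * n : ℕ) := by
  have hZU : Z * U ≠ 0 := h₇ ▸ pow_ne_zero 3 hX
  have hY : Y ≠ 0 := fun h ↦ mul_ne_zero hX (left_ne_zero_of_mul hZU) (by simp [← h₁, h])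
  have hT : T ≠ 0 := fun h ↦ mul_ne_zero hX (right_ne_zero_of_mul hZU) (by simp [← h₄, h])
  have hfin {W : V} (hW : W ≠ 0) : addVal V W ≠ ⊤ := fun h ↦ hW (addVal_eq_top_iff.mp h)
  have hfX := hfin hX
  have hfY := hfin hY
  have hfZ := hfin (left_ne_zero_of_mul hZU)
  have hfT := hfin hT
  have hfU := hfin (right_ne_zero_of_mul hZU)
  replace h₁ := congrArg (addVal V) h₁
  replace h₂ := congrArg (addVal V) h₂
  replace h₃ := congrArg (addVal V) h₃
  replace h₄ := congrArg (addVal V) h₄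
  replace h₇ := congrArg (addVal V) h₇
  simp only [AddValuation.map_mul, AddValuation.map_pow, nsmul_eq_mul] at h₁ h₂ h₃ h₄ h₇
  generalize addVal V X = a at *
  generalize addVal V Y = b at *
  generalize addVal V Z = c at *
  generalize addVal V T = d at *
  generalize addVal V U = e at *
  lift a to ℕ using hfX
  lift b to ℕ using hfY
  lift c to ℕ using hfZ
  lift d to ℕ using hfT
  lift e to ℕ using hfU
  norm_cast at h₁ h₂ h₃ h₄ h₇
  -- the valuations form an arithmetic progression with step `b - a`, and `c + e = 3a` pins `a`
  refine ⟨b - a, ?_, ?_, ?_, ?_, ?_⟩ <;> congr 1 <;> omega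

theorem algebraMap_integralClosure_injective (D : Type*) [CommRing D] [IsDomain D] :
    Function.Injective (algebraMap D (integralClosure D (FractionRing D))) :=
  fun _ _ h ↦ IsFractionRing.injective D (FractionRing D) (congrArg Subtype.val h)

theorem ker_algebraMap_integralClosure_comp_mk {R : Type*} [CommRing R] (p : Ideal R)
    [p.IsPrime] :
    RingHom.ker ((algebraMap (R ⧸ p) (integralClosure (R ⧸ p) (FractionRing (R ⧸ p)))).comp
      (Ideal.Quotient.mk p)) = p := by
  rw [← RingHom.comap_ker, (RingHom.injective_iff_ker_eq_bot _).mp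
    (algebraMap_integralClosure_injective _), ← RingHom.ker_eq_comap_bot, Ideal.mk_ker]

theorem not_isUnit_algebraMap_integralClosure_mk {R : Type*} [CommRing R] [IsLocalRing R]
    (p : Ideal R) [p.IsPrime] {x : R} (hx : x ∈ maximalIdeal R) :
    ¬IsUnit (algebraMap (R ⧸ p) (integralClosure (R ⧸ p) (FractionRing (R ⧸ p)))
      (Ideal.Quotient.mk p x)) := by
  have : IsLocalHom (Ideal.Quotient.mk p) := .of_surjective _ Ideal.Quotient.mk_surjective
  have : IsLocalHom (algebraMap (R ⧸ p) (integralClosure (R ⧸ p) (FractionRing (R ⧸ p)))) :=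
    (algebraMap_isIntegral_iff.mpr inferInstance).isLocalHom
      (algebraMap_integralClosure_injective _)
  exact fun h ↦ hx (isUnit_of_map_unit (Ideal.Quotient.mk p) x (isUnit_of_map_unit _ _ h))

theorem valuation_of_parameters_on_associated_prime_general
    (R : Type u) [CommRing R] [IsLocalRing R]
    (x y z t u : R)
    (hgen : Ideal.span {x, y, z, t, u} = IsLocalRing.maximalIdeal R)
    (I : Ideal R)
    (hI : I = Ideal.span {y ^ 2 - x * z, y * z - x * t, z ^ 2 - y * t, y * t - x * u,
      z * t - y * u, t ^ 2 - z * u, z * u - x ^ 3, t * u - x ^ 2 * y, u ^ 2 - x ^ 2 * z})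
    (p : Ideal R) (hp : p ∈ associatedPrimes R (R ⧸ I)) :
    haveI : p.IsPrime := hp.isPrime
    ∀ _ : IsDiscreteValuationRing (integralClosure (R ⧸ p) (FractionRing (R ⧸ p))),
      ∃ n : ℕ, 1 ≤ n ∧
        IsDiscreteValuationRing.addVal (integralClosure (R ⧸ p) (FractionRing (R ⧸ p)))
          (algebraMap (R ⧸ p) (integralClosure (R ⧸ p) (FractionRing (R ⧸ p)))
            (Ideal.Quotient.mk p x)) = (6 * n : ℕ) ∧
        IsDiscreteValuationRing.addVal (integralClosure (R ⧸ p) (FractionRing (R ⧸ p)))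
          (algebraMap (R ⧸ p) (integralClosure (R ⧸ p) (FractionRing (R ⧸ p)))
            (Ideal.Quotient.mk p y)) = (7 * n : ℕ) ∧
        IsDiscreteValuationRing.addVal (integralClosure (R ⧸ p) (FractionRing (R ⧸ p)))
          (algebraMap (R ⧸ p) (integralClosure (R ⧸ p) (FractionRing (R ⧸ p)))
            (Ideal.Quotient.mk p z)) = (8 * n : ℕ) ∧
        IsDiscreteValuationRing.addVal (integralClosure (R ⧸ p) (FractionRing (R ⧸ p)))
          (algebraMap (R ⧸ p) (integralClosure (R ⧸ p) (FractionRing (R ⧸ p)))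
            (Ideal.Quotient.mk p t)) = (9 * n : ℕ) ∧
        IsDiscreteValuationRing.addVal (integralClosure (R ⧸ p) (FractionRing (R ⧸ p)))
          (algebraMap (R ⧸ p) (integralClosure (R ⧸ p) (FractionRing (R ⧸ p)))
            (Ideal.Quotient.mk p u)) = (10 * n : ℕ) := by
  have hprime : p.IsPrime := hp.isPrime
  intro _
  let f := (algebraMap (R ⧸ p) (integralClosure (R ⧸ p) (FractionRing (R ⧸ p)))).comp
    (Ideal.Quotient.mk p)
  have hrel {a b : R} (h : a - b ∈ p) : f a = f b :=
    (RingHom.sub_mem_ker_iff f).mp ((ker_algebraMap_integralClosure_comp_mk p).ge h)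
  have hIp : I ≤ p := by
    simpa [Submodule.annihilator_top, Ideal.annihilator_quotient] using hp.annihilator_le
  rw [hI, Ideal.span_le] at hIp
  have hxp : x ∉ p := by
    intro hx
    have hpm : p = maximalIdeal R := (le_maximalIdeal hprime.ne_top).antisymm <| hgen ▸
      span_le_of_mem_of_relations (hIp (by simp)) (hIp (by simp)) (hIp (by simp))
        (hIp (by simp)) hx
    exact not_isField_of_isDiscreteValuationRing_integralClosure <|
      (Ideal.Quotient.maximal_ideal_iff_isField_quotient p).mp (hpm ▸ inferInstance)
  obtain ⟨n, hx, hy, hz, ht, hu⟩ := exists_addVal_eq_of_relations (X := f x) (Y := f y)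
    (Z := f z) (T := f t) (U := f u)
    (by rwa [ne_eq, ← RingHom.mem_ker, ker_algebraMap_integralClosure_comp_mk])
    (by simp only [← map_pow, ← map_mul]; exact hrel (hIp (by simp)))
    (by simp only [← map_mul]; exact hrel (hIp (by simp)))
    (by simp only [← map_pow, ← map_mul]; exact hrel (hIp (by simp)))
    (by simp only [← map_mul]; exact hrel (hIp (by simp)))
    (by simp only [← map_pow, ← map_mul]; exact hrel (hIp (by simp)))
  refine ⟨n, Nat.one_le_iff_ne_zero.mpr ?_, hx, hy, hz, ht, hu⟩
  rintro rfl
  exact not_isUnit_algebraMap_integralClosure_mk p (hgen ▸ Ideal.subset_span (by simp))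
    (addVal_eq_zero_iff.mp (by simpa [f] using hx))

/-- In a complete regular local ring of dimension `5` with regular system of parameters
`x, y, z, t, u` and `I = (f₁, …, f₉)`, let `p` be an associated prime of `R ⧸ I`,
`D = R ⧸ p`, `V` the integral closure of `D` in its fraction field (a discrete valuation
ring) and `ν` the corresponding valuation. Then there is `n ≥ 1` with
`(ν x, ν y, ν z, ν t, ν u) = (6n, 7n, 8n, 9n, 10n)`, where `x, …, u` denote the images
in `D` of the parameters. -/
theorem valuation_of_parameters_on_associated_prime
    (R : Type u) [CommRing R] [IsLocalRing R]
    [IsAdicComplete (IsLocalRing.maximalIdeal R) R]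
    (hreg : IsRegularLocalRing' R) (hdim : ringKrullDim R = 5)
    (x y z t u : R)
    (hgen : Ideal.span {x, y, z, t, u} = IsLocalRing.maximalIdeal R)
    (I : Ideal R)
    (hI : I = Ideal.span {y ^ 2 - x * z, y * z - x * t, z ^ 2 - y * t, y * t - x * u,
      z * t - y * u, t ^ 2 - z * u, z * u - x ^ 3, t * u - x ^ 2 * y, u ^ 2 - x ^ 2 * z})
    (p : Ideal R) (hp : p ∈ associatedPrimes R (R ⧸ I)) :
    haveI : p.IsPrime := hp.isPrime
    ∀ _ : IsDiscreteValuationRing (integralClosure (R ⧸ p) (FractionRing (R ⧸ p))),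
      ∃ n : ℕ, 1 ≤ n ∧
        IsDiscreteValuationRing.addVal (integralClosure (R ⧸ p) (FractionRing (R ⧸ p)))
          (algebraMap (R ⧸ p) (integralClosure (R ⧸ p) (FractionRing (R ⧸ p)))
            (Ideal.Quotient.mk p x)) = (6 * n : ℕ) ∧
        IsDiscreteValuationRing.addVal (integralClosure (R ⧸ p) (FractionRing (R ⧸ p)))
          (algebraMap (R ⧸ p) (integralClosure (R ⧸ p) (FractionRing (R ⧸ p)))
            (Ideal.Quotient.mk p y)) = (7 * n : ℕ) ∧
        IsDiscreteValuationRing.addVal (integralClosure (R ⧸ p) (FractionRing (R ⧸ p)))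
          (algebraMap (R ⧸ p) (integralClosure (R ⧸ p) (FractionRing (R ⧸ p)))
            (Ideal.Quotient.mk p z)) = (8 * n : ℕ) ∧
        IsDiscreteValuationRing.addVal (integralClosure (R ⧸ p) (FractionRing (R ⧸ p)))
          (algebraMap (R ⧸ p) (integralClosure (R ⧸ p) (FractionRing (R ⧸ p)))
            (Ideal.Quotient.mk p t)) = (9 * n : ℕ) ∧
        IsDiscreteValuationRing.addVal (integralClosure (R ⧸ p) (FractionRing (R ⧸ p)))
          (algebraMap (R ⧸ p) (integralClosure (R ⧸ p) (FractionRing (R ⧸ p)))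
            (Ideal.Quotient.mk p u)) = (10 * n : ℕ) :=
  valuation_of_parameters_on_associated_prime_general R x y z t u hgen I hI p hp
end
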